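/- arXiv:2209.05081 — 6 statements merged into one kernel-verified Lean document; each statement's English description precedes it below -/
import Mathlib

section
/- Let p, q, y_I, y_M be real numbers and let a : ℕ → ℝ be the ensemble-average sequence a(n) = (P_b^n)₁₁·y_I + (P_b^n)₁₂·y_M. Then a(0) = y_I, a(1) = p·y_I + (1−p)·y_M, and for every n ≥ 2, a(n) = (p+q)·a(n−1) − p·q·a(n−2). -/
open Matrix

noncomputable def Pb (p q : ℝ) : Matrix (Fin 3) (Fin 3) ℝ :=
  !![p, 1 - p, 0; 0, q, 1 - q; 0, 0, 1]

/-- With `E` the shift, `(E - p)(E - q)` annihilates both `x` and `y`. -/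
theorem combination_recurrence_of_triangular {R : Type*} [CommRing R] {p q c : R}
    {x y : ℕ → R} (hx : ∀ n, x (n + 1) = p * x n) (hy : ∀ n, y (n + 1) = c * x n + q * y n)
    (α β : R) (n : ℕ) :
    x (n + 2) * α + y (n + 2) * β =
      (p + q) * (x (n + 1) * α + y (n + 1) * β) - p * q * (x n * α + y n * β) := by
  rw [hx, hy (n + 1), hx, hy]
  ring

namespace Pb

variable (p q : ℝ) (n : ℕ)

theorem pow_succ_apply_zero_zero : (Pb p q ^ (n + 1)) 0 0 = p * (Pb p q ^ n) 0 0 := by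
  simp [pow_succ, Pb, mul_apply, Fin.sum_univ_three, mul_comm]

theorem pow_succ_apply_zero_one :
    (Pb p q ^ (n + 1)) 0 1 = (1 - p) * (Pb p q ^ n) 0 0 + q * (Pb p q ^ n) 0 1 := by
  simp [pow_succ, Pb, mul_apply, Fin.sum_univ_three, mul_comm]

end Pb

theorem stmt_0 (p q yI yM : ℝ)
    (a : ℕ → ℝ) (ha : ∀ n, a n = (Pb p q ^ n) 0 0 * yI + (Pb p q ^ n) 0 1 * yM) :
    a 0 = yI ∧ a 1 = p * yI + (1 - p) * yM ∧
      ∀ n, 2 ≤ n → a n = (p + q) * a (n - 1) - p * q * a (n - 2) := by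
  refine ⟨by simp [ha], by simp [ha, Pb], fun n hn => ?_⟩
  obtain ⟨m, rfl⟩ := Nat.exists_eq_add_of_le' hn
  simp only [ha, Nat.add_sub_cancel, show m + 2 - 1 = m + 1 from rfl]
  exact combination_recurrence_of_triangular (x := fun n => (Pb p q ^ n) 0 0)
    (y := fun n => (Pb p q ^ n) 0 1) (Pb.pow_succ_apply_zero_zero p q)
    (Pb.pow_succ_apply_zero_one p q) yI yM m
end

section
/- Let p, q, k_I, k_M be real numbers with q ≠ p, p ≠ 1, and k_M = q·k_I/(1−p). Then for every n ≥ 0, the sequence b(n) = (P_b^n)₁₁·k_I + (P_b^n)₁₂·k_M satisfies b(n) = ((q^{n+1} − p^{n+1})/(q − p))·k_I. -/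
open Matrix

section Pb

variable (p q : ℝ)

lemma Pb_pow_succ_apply_zero_zero (n : ℕ) :
    (Pb p q ^ (n + 1)) 0 0 = (Pb p q ^ n) 0 0 * p := by
  simp [pow_succ, mul_apply, Fin.sum_univ_three, Pb]

lemma Pb_pow_succ_apply_zero_one (n : ℕ) :
    (Pb p q ^ (n + 1)) 0 1 = (Pb p q ^ n) 0 0 * (1 - p) + (Pb p q ^ n) 0 1 * q := by
  simp [pow_succ, mul_apply, Fin.sum_univ_three, Pb]

lemma Pb_pow_apply_zero_zero (n : ℕ) : (Pb p q ^ n) 0 0 = p ^ n := by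
  induction n with
  | zero => simp
  | succ n ih => rw [Pb_pow_succ_apply_zero_zero, ih, pow_succ]

lemma sub_mul_Pb_pow_apply_zero_one (n : ℕ) :
    (q - p) * (Pb p q ^ n) 0 1 = (1 - p) * (q ^ n - p ^ n) := by
  induction n with
  | zero => simp
  | succ n ih =>
    rw [Pb_pow_succ_apply_zero_one, Pb_pow_apply_zero_zero]
    linear_combination q * ih

end Pb

theorem stmt_3 (p q kI kM : ℝ) (hpq : q ≠ p) (hp : p ≠ 1)
    (hkM : kM = q * kI / (1 - p))
    (b : ℕ → ℝ) (hb : ∀ n, b n = (Pb p q ^ n) 0 0 * kI + (Pb p q ^ n) 0 1 * kM) :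
    ∀ n, b n = ((q ^ (n + 1) - p ^ (n + 1)) / (q - p)) * kI := by
  intro n
  have hqp : q - p ≠ 0 := sub_ne_zero.mpr hpq
  have h1p : 1 - p ≠ 0 := sub_ne_zero.mpr hp.symm
  rw [hb, Pb_pow_apply_zero_zero, hkM]
  field_simp
  linear_combination q * kI * sub_mul_Pb_pow_apply_zero_one p q n
end

section
/- Let p, q, β, y_I, y_M be real numbers with 0 ≤ p < 1, 0 ≤ q < 1 and 0 < β < 1, and let a(n) = (P_b^n)₁₁·y_I + (P_b^n)₁₂·y_M. Then the series Σ_{n=0}^∞ β^n·a(n) converges and equals (1/(1−β·p))·(y_I + (β·(1−p)/(1−β·q))·y_M). Equivalently, the present discount value multiplier (1−β·p)·Σ_{n=0}^∞ β^n·a(n) equals y_I + (β·(1−p)/(1−β·q))·y_M. -/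
/-!
`P_b` is row-stochastic, so in the `L∞` operator norm `‖β • P_b‖ ≤ β < 1` and the discounted
series `∑ βⁿ P_bⁿ` converges to `(1 - β • P_b)⁻¹`. This inverse is upper triangular and can be
written down by back substitution; the discounted sum of `a` is `y_I`, `y_M` against its first row.
-/

open Matrix

theorem HasSum.geometric_of_one_sub_mul_eq_one {R : Type*} [NormedRing R]
    [HasSummableGeomSeries R] {x y : R} (hx : ‖x‖ < 1) (hy : (1 - x) * y = 1) :
    HasSum (fun n ↦ x ^ n) y := by
  convert (summable_geometric_of_norm_lt_one hx).hasSum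
  calc y = (∑' n, x ^ n) * (1 - x) * y := by rw [geom_series_mul_neg x hx, one_mul]
    _ = ∑' n, x ^ n := by rw [mul_assoc, hy, mul_one]

section LinftyOp

attribute [local instance] Matrix.linftyOpNormedRing Matrix.linftyOpNormedAlgebra

variable {n : Type*} [Fintype n] [DecidableEq n] {M : Matrix n n ℝ}

theorem Matrix.linfty_opNorm_le_one_of_mem_rowStochastic (hM : M ∈ rowStochastic ℝ n) :
    ‖M‖ ≤ 1 := by
  rw [linfty_opNorm_def, NNReal.coe_le_one, Finset.sup_le_iff]
  intro i _
  rw [← NNReal.coe_le_one, NNReal.coe_sum]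
  simp only [coe_nnnorm, Real.norm_of_nonneg (nonneg_of_mem_rowStochastic hM),
    sum_row_of_mem_rowStochastic hM i, le_refl]

theorem Matrix.hasSum_geometric_mul_pow_apply_of_mem_rowStochastic (hM : M ∈ rowStochastic ℝ n)
    {β : ℝ} (hβ0 : 0 ≤ β) (hβ1 : β < 1) {N : Matrix n n ℝ} (hN : (1 - β • M) * N = 1)
    (i j : n) : HasSum (fun k ↦ β ^ k * (M ^ k) i j) (N i j) := by
  have hnorm : ‖β • M‖ < 1 :=
    calc ‖β • M‖ ≤ ‖β‖ * ‖M‖ := norm_smul_le β M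
      _ ≤ β * 1 := by
        rw [Real.norm_of_nonneg hβ0]
        exact mul_le_mul_of_nonneg_left (linfty_opNorm_le_one_of_mem_rowStochastic hM) hβ0
      _ < 1 := by linarith
  have hsum := HasSum.geometric_of_one_sub_mul_eq_one hnorm hN
  simpa [smul_pow] using Pi.hasSum.1 (Pi.hasSum.1 hsum i) j

end LinftyOp

theorem Pb_mem_rowStochastic {p q : ℝ} (hp0 : 0 ≤ p) (hp1 : p ≤ 1) (hq0 : 0 ≤ q) (hq1 : q ≤ 1) :
    Pb p q ∈ rowStochastic ℝ (Fin 3) := by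
  rw [mem_rowStochastic_iff_sum]
  refine ⟨fun i j ↦ ?_, fun i ↦ ?_⟩ <;> fin_cases i <;> try fin_cases j
  all_goals simp [Pb, Fin.sum_univ_three] <;> linarith

noncomputable def resolventPb (p q β : ℝ) : Matrix (Fin 3) (Fin 3) ℝ :=
  !![1 / (1 - β * p), β * (1 - p) / ((1 - β * p) * (1 - β * q)),
      β ^ 2 * (1 - p) * (1 - q) / ((1 - β * p) * (1 - β * q) * (1 - β));
    0, 1 / (1 - β * q), β * (1 - q) / ((1 - β * q) * (1 - β));
    0, 0, 1 / (1 - β)]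

theorem one_sub_smul_Pb_mul_resolventPb {p q β : ℝ} (hp : 1 - β * p ≠ 0) (hq : 1 - β * q ≠ 0)
    (hβ : 1 - β ≠ 0) : (1 - β • Pb p q) * resolventPb p q β = 1 := by
  ext i j
  fin_cases i <;> fin_cases j <;>
    simp [Pb, resolventPb, Matrix.mul_apply, Fin.sum_univ_three, Matrix.one_apply] <;>
    field_simp <;> ring

theorem stmt_4 (p q β yI yM : ℝ) (hp0 : 0 ≤ p) (hp1 : p < 1) (hq0 : 0 ≤ q) (hq1 : q < 1)
    (hβ0 : 0 < β) (hβ1 : β < 1)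
    (a : ℕ → ℝ) (ha : ∀ n, a n = (Pb p q ^ n) 0 0 * yI + (Pb p q ^ n) 0 1 * yM) :
    HasSum (fun n => β ^ n * a n)
        ((1 / (1 - β * p)) * (yI + (β * (1 - p) / (1 - β * q)) * yM)) ∧
      (1 - β * p) * (∑' n, β ^ n * a n) = yI + (β * (1 - p) / (1 - β * q)) * yM := by
  have hβp : 1 - β * p ≠ 0 := by nlinarith
  have hβq : 1 - β * q ≠ 0 := by nlinarith
  have hN := one_sub_smul_Pb_mul_resolventPb hβp hβq (sub_ne_zero.2 hβ1.ne')
  have hP := Pb_mem_rowStochastic hp0 hp1.le hq0 hq1.le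
  have h00 := hasSum_geometric_mul_pow_apply_of_mem_rowStochastic hP hβ0.le hβ1 hN 0 0
  have h01 := hasSum_geometric_mul_pow_apply_of_mem_rowStochastic hP hβ0.le hβ1 hN 0 1
  simp only [resolventPb, of_apply, cons_val', cons_val_zero, cons_val_one, empty_val',
    cons_val_fin_one] at h00 h01
  have hsum : HasSum (fun n => β ^ n * a n)
      ((1 / (1 - β * p)) * (yI + (β * (1 - p) / (1 - β * q)) * yM)) := by
    have hsplit : (fun n ↦ β ^ n * a n) =
        fun n ↦ β ^ n * (Pb p q ^ n) 0 0 * yI + β ^ n * (Pb p q ^ n) 0 1 * yM := by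
      ext n; rw [ha]; ring
    rw [hsplit, show 1 / (1 - β * p) * (yI + β * (1 - p) / (1 - β * q) * yM) =
      1 / (1 - β * p) * yI + β * (1 - p) / ((1 - β * p) * (1 - β * q)) * yM by field_simp]
    exact (h00.mul_right yI).add (h01.mul_right yM)
  refine ⟨hsum, ?_⟩
  rw [hsum.tsum_eq]
  field_simp
end

section
/- Assume the Markov restrictions of model M hold, that k_M ≠ 0, and that the matrix A₀ − q·A is invertible. Then q satisfies the fixed-point equation q = ρ + q·(D₀ ⬝ ((A₀ − q·A)⁻¹ *ᵥ B)), i.e. q solves the same implicit equation as the state-space coefficient η_k of the auto-regressive model. -/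
/-! With `c := k_I / (1 - p)`, restriction (v) reads `k_M = q c` and, after solving (ii) for `Y_M`,
restriction (iv) reads `k_M = ρ c + k_M s` with `s := D₀ ⬝ᵥ (A₀ - q A)⁻¹ B`; hence
`q c = (ρ + q s) c`, and `c ≠ 0` because `k_M ≠ 0`. -/

open Matrix

theorem Matrix.eq_smul_inv_mulVec_of_mulVec_eq_smul {n R : Type*} [Fintype n] [DecidableEq n]
    [CommRing R] {M : Matrix n n R} (hM : IsUnit M) {x b : n → R} {k : R}
    (h : M *ᵥ x = k • b) : x = k • (M⁻¹ *ᵥ b) := by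
  have := hM.invertible
  rw [← mulVec_smul, ← h, inv_mulVec_eq_vec rfl]

theorem stmt_7_general {N : ℕ}
    (A₀ A : Matrix (Fin N) (Fin N) ℝ) (B D₀ Y_M : Fin N → ℝ)
    (ρ p q k_I k_M : ℝ)
    (h2 : A₀ *ᵥ Y_M = q • (A *ᵥ Y_M) + k_M • B)
    (h4 : k_M = (ρ / (1 - p)) * k_I + D₀ ⬝ᵥ Y_M)
    (h5 : k_M = q * k_I / (1 - p))
    (hkM : k_M ≠ 0)
    (hinv : IsUnit (A₀ - q • A)) :
    q = ρ + q * (D₀ ⬝ᵥ ((A₀ - q • A)⁻¹ *ᵥ B)) := by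
  set s := D₀ ⬝ᵥ ((A₀ - q • A)⁻¹ *ᵥ B)
  set c := k_I / (1 - p)
  have hY : Y_M = k_M • ((A₀ - q • A)⁻¹ *ᵥ B) := by
    refine eq_smul_inv_mulVec_of_mulVec_eq_smul hinv ?_
    rw [sub_mulVec, smul_mulVec, h2, add_sub_cancel_left]
  have hq : k_M = q * c := by rw [h5, mul_div_assoc]
  have hρ : k_M = ρ * c + k_M * s := by
    conv_lhs => rw [h4]
    rw [hY, dotProduct_smul, smul_eq_mul, div_mul_eq_mul_div, mul_div_assoc]
  have hc : c ≠ 0 := right_ne_zero_of_mul (hq ▸ hkM)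
  apply mul_right_cancel₀ hc
  linear_combination hρ + (s - 1) * hq

theorem stmt_7 {N : ℕ} (hN : 1 ≤ N)
    (A₀ A : Matrix (Fin N) (Fin N) ℝ) (B C D₀ Y_I Y_M : Fin N → ℝ)
    (e ρ p q k_I k_M : ℝ) (hp : p ≠ 1)
    (h1 : A₀ *ᵥ Y_I = p • (A *ᵥ Y_I) + (1 - p) • (A *ᵥ Y_M) + k_I • B + C)
    (h2 : A₀ *ᵥ Y_M = q • (A *ᵥ Y_M) + k_M • B)
    (h3 : k_I = D₀ ⬝ᵥ Y_I + e)
    (h4 : k_M = (ρ / (1 - p)) * k_I + D₀ ⬝ᵥ Y_M)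
    (h5 : k_M = q * k_I / (1 - p))
    (hkM : k_M ≠ 0)
    (hinv : IsUnit (A₀ - q • A)) :
    q = ρ + q * (D₀ ⬝ᵥ ((A₀ - q • A)⁻¹ *ᵥ B)) :=
  stmt_7_general A₀ A B D₀ Y_M ρ p q k_I k_M h2 h4 h5 hkM hinv
end

section
/- Assume the Markov restrictions of model M hold. Define the sequences z(n) = p^n, Y(n) = (P_b^n)₁₁·Y_I + (P_b^n)₁₂·Y_M (a vector in ℝ^N), and K(n) = (P_b^n)₁₁·k_I + (P_b^n)₁₂·k_M. Then these sequences satisfy the equations of model A after a unit shock: for every n ≥ 0, A₀ *ᵥ Y(n) = A *ᵥ Y(n+1) + K(n)·B + z(n)·C; moreover K(0) = D₀ ⬝ Y(0) + e, and for every n ≥ 1, K(n) = ρ·K(n−1) + D₀ ⬝ Y(n) + e·z(n). -/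
/-!
The first row of `Pb p q ^ n` is `(p ^ n, b n, _)` with `b (n + 1) = p ^ n (1 - p) + q b n`, so one
application of restrictions (i) and (ii) moves `Y n` to `Y (n + 1)`. Restriction (v) gives
`K n = b (n + 1) k_I / (1 - p)`, which is exactly what turns (iii) and (iv) into the recursion
`K n = ρ K (n - 1) + D₀ ⬝ Y n + e z n`.
-/

open Matrix

lemma Pb_pow_zero_zero (p q : ℝ) (n : ℕ) : (Pb p q ^ n) 0 0 = p ^ n := by
  induction n with
  | zero => simp
  | succ n ih =>
    rw [pow_succ, pow_succ, mul_apply, Fin.sum_univ_three, ih]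
    simp [Pb]

lemma Pb_pow_succ_zero_one (p q : ℝ) (n : ℕ) :
    (Pb p q ^ (n + 1)) 0 1 = p ^ n * (1 - p) + (Pb p q ^ n) 0 1 * q := by
  rw [pow_succ, mul_apply, Fin.sum_univ_three, Pb_pow_zero_zero]
  simp [Pb]

lemma mulVec_smul_add_smul_of_markov {R ι : Type*} [CommRing R] [Fintype ι]
    {A₀ A : Matrix ι ι R} {B C Y_I Y_M : ι → R} {p q k_I k_M : R}
    (h1 : A₀ *ᵥ Y_I = p • (A *ᵥ Y_I) + (1 - p) • (A *ᵥ Y_M) + k_I • B + C)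
    (h2 : A₀ *ᵥ Y_M = q • (A *ᵥ Y_M) + k_M • B) (a b : R) :
    A₀ *ᵥ (a • Y_I + b • Y_M) =
      A *ᵥ ((a * p) • Y_I + (a * (1 - p) + b * q) • Y_M) + (a * k_I + b * k_M) • B + a • C := by
  simp only [mulVec_add, mulVec_smul, h1, h2]
  module

lemma mul_add_mul_eq_div_of_eq_div {K : Type*} [Field K] {p q k_I k_M : K} (hp : p ≠ 1)
    (h5 : k_M = q * k_I / (1 - p)) (a b : K) :
    a * k_I + b * k_M = (a * (1 - p) + b * q) * k_I / (1 - p) := by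
  have hp' : 1 - p ≠ 0 := sub_ne_zero.mpr hp.symm
  rw [h5]
  field_simp

theorem stmt_9_general {N : ℕ}
    (A₀ A : Matrix (Fin N) (Fin N) ℝ) (B C D₀ Y_I Y_M : Fin N → ℝ)
    (e ρ p q k_I k_M : ℝ) (hp : p ≠ 1)
    (h1 : A₀ *ᵥ Y_I = p • (A *ᵥ Y_I) + (1 - p) • (A *ᵥ Y_M) + k_I • B + C)
    (h2 : A₀ *ᵥ Y_M = q • (A *ᵥ Y_M) + k_M • B)
    (h3 : k_I = D₀ ⬝ᵥ Y_I + e)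
    (h4 : k_M = (ρ / (1 - p)) * k_I + D₀ ⬝ᵥ Y_M)
    (h5 : k_M = q * k_I / (1 - p))
    (z : ℕ → ℝ) (hz : ∀ n, z n = p ^ n)
    (Y : ℕ → Fin N → ℝ)
    (hY : ∀ n, Y n = (Pb p q ^ n) 0 0 • Y_I + (Pb p q ^ n) 0 1 • Y_M)
    (K : ℕ → ℝ)
    (hK : ∀ n, K n = (Pb p q ^ n) 0 0 * k_I + (Pb p q ^ n) 0 1 * k_M) :
    (∀ n, A₀ *ᵥ Y n = A *ᵥ Y (n + 1) + K n • B + z n • C) ∧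
      K 0 = D₀ ⬝ᵥ Y 0 + e ∧
      ∀ n, 1 ≤ n → K n = ρ * K (n - 1) + D₀ ⬝ᵥ Y n + e * z n := by
  refine ⟨fun n => ?_, ?_, fun n hn => ?_⟩
  · rw [hY, hY, hK, hz, Pb_pow_zero_zero, Pb_pow_zero_zero, Pb_pow_succ_zero_one, pow_succ]
    exact mulVec_smul_add_smul_of_markov h1 h2 _ _
  · simp [hK, hY, h3]
  · obtain ⟨m, rfl⟩ := Nat.exists_eq_add_of_le' hn
    have hKm : K m = (Pb p q ^ (m + 1)) 0 1 * k_I / (1 - p) := by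
      rw [hK, Pb_pow_zero_zero, Pb_pow_succ_zero_one, mul_add_mul_eq_div_of_eq_div hp h5]
    rw [Nat.add_sub_cancel, hKm, hK, hY, hz, Pb_pow_zero_zero, dotProduct_add, dotProduct_smul,
      dotProduct_smul, smul_eq_mul, smul_eq_mul]
    linear_combination p ^ (m + 1) * h3 + (Pb p q ^ (m + 1)) 0 1 * h4

theorem stmt_9 {N : ℕ} (hN : 1 ≤ N)
    (A₀ A : Matrix (Fin N) (Fin N) ℝ) (B C D₀ Y_I Y_M : Fin N → ℝ)
    (e ρ p q k_I k_M : ℝ) (hp : p ≠ 1)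
    (h1 : A₀ *ᵥ Y_I = p • (A *ᵥ Y_I) + (1 - p) • (A *ᵥ Y_M) + k_I • B + C)
    (h2 : A₀ *ᵥ Y_M = q • (A *ᵥ Y_M) + k_M • B)
    (h3 : k_I = D₀ ⬝ᵥ Y_I + e)
    (h4 : k_M = (ρ / (1 - p)) * k_I + D₀ ⬝ᵥ Y_M)
    (h5 : k_M = q * k_I / (1 - p))
    (z : ℕ → ℝ) (hz : ∀ n, z n = p ^ n)
    (Y : ℕ → Fin N → ℝ)
    (hY : ∀ n, Y n = (Pb p q ^ n) 0 0 • Y_I + (Pb p q ^ n) 0 1 • Y_M)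
    (K : ℕ → ℝ)
    (hK : ∀ n, K n = (Pb p q ^ n) 0 0 * k_I + (Pb p q ^ n) 0 1 * k_M) :
    (∀ n, A₀ *ᵥ Y n = A *ᵥ Y (n + 1) + K n • B + z n • C) ∧
      K 0 = D₀ ⬝ᵥ Y 0 + e ∧
      ∀ n, 1 ≤ n → K n = ρ * K (n - 1) + D₀ ⬝ᵥ Y n + e * z n :=
  stmt_9_general A₀ A B C D₀ Y_I Y_M e ρ p q k_I k_M hp h1 h2 h3 h4 h5 z hz Y hY K hK
end

section
/- Let a, b, d, ρ, p, q, y_M, k_I, k_M be real numbers with p ≠ 1, 1 − a·q ≠ 0 and k_I ≠ 0. If y_M = a·q·y_M + b·k_M, k_M = (ρ/(1−p))·k_I + d·y_M, and k_M = q·k_I/(1−p), then q satisfies the quadratic equation a·q² − (1 + a·ρ − b·d)·q + ρ = 0. -/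
theorem stmt_10_general (a b d ρ p q y_M k_I k_M : ℝ) (hp : p ≠ 1)
    (hkI : k_I ≠ 0)
    (h1 : y_M = a * q * y_M + b * k_M)
    (h2 : k_M = (ρ / (1 - p)) * k_I + d * y_M)
    (h3 : k_M = q * k_I / (1 - p)) :
    a * q ^ 2 - (1 + a * ρ - b * d) * q + ρ = 0 := by
  have hp' : 1 - p ≠ 0 := sub_ne_zero.mpr hp.symm
  have hkq : (1 - p) * k_M = q * k_I := by rw [h3]; field_simp
  have hkρ : (1 - p) * k_M = ρ * k_I + d * (1 - p) * y_M := by rw [h2]; field_simp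
  have hy : (q - ρ) * k_I = d * (1 - p) * y_M := by linear_combination hkρ - hkq
  -- `h1` turns `(1 - a * q) * y_M` into `b * k_M`, and `hkq` turns `(1 - p) * k_M` into `q * k_I`
  have key : ((1 - a * q) * (q - ρ) - b * d * q) * k_I = 0 := by
    linear_combination (1 - a * q) * hy + d * (1 - p) * h1 + b * d * hkq
  linear_combination -(mul_eq_zero.mp key).resolve_right hkI

theorem stmt_10 (a b d ρ p q y_M k_I k_M : ℝ) (hp : p ≠ 1) (haq : 1 - a * q ≠ 0)
    (hkI : k_I ≠ 0)
    (h1 : y_M = a * q * y_M + b * k_M)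
    (h2 : k_M = (ρ / (1 - p)) * k_I + d * y_M)
    (h3 : k_M = q * k_I / (1 - p)) :
    a * q ^ 2 - (1 + a * ρ - b * d) * q + ρ = 0 :=
  stmt_10_general a b d ρ p q y_M k_I k_M hp hkI h1 h2 h3
end
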